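/- Let A be an elementary abelian finite p-group. For every 2 ≤ i ≤ p, the subgroup γ_i(W(A)) consists exactly of the tuples in B(A) that are solutions of either of the following equivalent systems of word equations: (a) M((X−1)^ℓ) = 1 for all p−i+1 ≤ ℓ ≤ p−1; (b) M(f^{(ℓ)}(X)) = 1 for all 0 ≤ ℓ ≤ i−2, where f(X) = 1 + X + ⋯ + X^{p−1} and f^{(ℓ)} denotes the ℓ-th derivative. -/

import Mathlib

open Pointwise

namespace GGS
noncomputable section

variable (p : ℕ)

def shiftAut (G : Type*) [Group G] : Multiplicative (ZMod p) →* MulAut (ZMod p → G) :=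
  MonoidHom.mk'
    (fun k =>
      { toFun := fun g i => g (i + Multiplicative.toAdd k)
        invFun := fun g i => g (i - Multiplicative.toAdd k)
        left_inv := fun g => by funext i; simp
        right_inv := fun g => by funext i; simp
        map_mul' := fun g h => rfl })
    (fun k l => by
      apply MulEquiv.ext
      intro g
      funext i
      show g (i + Multiplicative.toAdd (k * l)) = g (i + Multiplicative.toAdd k + Multiplicative.toAdd l)
      rw [toAdd_mul, add_assoc])

abbrev W (G : Type*) [Group G] :=
  SemidirectProduct (ZMod p → G) (Multiplicative (ZMod p)) (shiftAut p G)

def inlW (G : Type*) [Group G] : (ZMod p → G) →* W p G := SemidirectProduct.inl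

def sigma (G : Type*) [Group G] : W p G := SemidirectProduct.inr (Multiplicative.ofAdd (1 : ZMod p))

def baseW (G : Type*) [Group G] : Subgroup (W p G) := (inlW p G).range

/-- Δ(g) = [g,σ] = g⁻¹ σ⁻¹ g σ, read off in the base group. -/
def Delta (G : Type*) [Group G] (g : ZMod p → G) : ZMod p → G :=
  ((inlW p G g)⁻¹ * (sigma p G)⁻¹ * inlW p G g * sigma p G).left

/-- γ₁* = B(G), γ_{i+1}* = [γ_i*, W(G)]; here `gammaStar n` is γ_{n+1}*. -/
def gammaStar (G : Type*) [Group G] : ℕ → Subgroup (W p G)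
  | 0 => baseW p G
  | (n + 1) => ⁅gammaStar G n, ⊤⁆

def lamG (G : Type*) [Group G] (g : G) (i : ℕ) : ZMod p → G :=
  (Delta p G)^[i - 1] (fun t => if t = 0 then g else 1)

def BSub (G : Type*) [Group G] (H : Subgroup G) : Subgroup (W p G) :=
  Subgroup.map (inlW p G) (Subgroup.pi Set.univ fun _ => H)

def inlF (F : Type*) [AddGroup F] (v : ZMod p → F) : W p (Multiplicative F) :=
  inlW p (Multiplicative F) (fun i => Multiplicative.ofAdd (v i))

def DeltaF (F : Type*) [AddGroup F] (v : ZMod p → F) : ZMod p → F :=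
  fun i => Multiplicative.toAdd (Delta p (Multiplicative F) (fun j => Multiplicative.ofAdd (v j)) i)

def lamF (F : Type*) [AddGroup F] [One F] (i : ℕ) : ZMod p → F :=
  (DeltaF p F)^[i - 1] (fun j => if j = 0 then 1 else 0)

end
end GGS

namespace GGS
noncomputable section
variable (p : ℕ)

/-- the word M(q) associated to a polynomial q over 𝔽_p, evaluated at a tuple:
    M(q)(a₀,…,a_{p−1}) = a₀^{q₀}·a₁^{q₁}·⋯·a_{p−1}^{q_{p−1}}. -/
def Mword [NeZero p] (A : Type*) [CommGroup A] (q : Polynomial (ZMod p))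
    (v : ZMod p → A) : A :=
  ∏ j : ZMod p, v j ^ (q.coeff j.val).val

end
end GGS

open GGS

/-!
Let `Δ v = v / (v shifted by one)` on `B(A) = ZMod p → A`. Then `[inl v, σ] = inl (Δ v)`, and the
commutator of `inl v` with an arbitrary element is a product of shifts of `Δ v`; as the subgroups
`Δⁿ B(A)` are shift-invariant, `γ_{n+1}(W(A)) = inl (Δⁿ B(A))`. For `deg g < p - 1` one has
`M(g)(Δ v) = M((X - 1) g)(v)⁻¹`, and `Δ` maps onto the tuples with `M((X - 1)^{p-1}) = ∏ v = 1`
(in characteristic `p`, `(X - 1)^{p-1} = 1 + X + ⋯ + X^{p-1}`). Induction on `n` then identifies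
`Δⁿ B(A)` with the solutions of system (a). System (b) is equivalent because `f = (X - 1)^{p-1}`, so
`f^{(ℓ)}` is a nonzero multiple of `(X - 1)^{p-1-ℓ}` for `ℓ < p`.
-/

open Polynomial
open scoped commutatorElement

namespace GGS

section Mword

variable {p : ℕ} {A : Type*} [CommGroup A]

lemma pow_val_mul (hA : ∀ a : A, a ^ p = 1) (a : A) (x y : ZMod p) :
    a ^ (x * y).val = (a ^ x.val) ^ y.val := by
  rw [ZMod.val_mul, ← pow_eq_pow_mod _ (hA a), pow_mul]

variable [NeZero p]

lemma pow_val_add (hA : ∀ a : A, a ^ p = 1) (a : A) (x y : ZMod p) :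
    a ^ (x + y).val = a ^ x.val * a ^ y.val := by
  rw [ZMod.val_add, ← pow_eq_pow_mod _ (hA a), pow_add]

lemma pow_val_sub (hA : ∀ a : A, a ^ p = 1) (a : A) (x y : ZMod p) :
    a ^ (x - y).val = a ^ x.val / a ^ y.val := by
  rw [eq_div_iff_mul_eq', ← pow_val_add hA, sub_add_cancel]

lemma Mword_div (q : (ZMod p)[X]) (v w : ZMod p → A) :
    Mword p A q (v / w) = Mword p A q v / Mword p A q w := by
  simp only [Mword, Pi.div_apply, div_pow, Finset.prod_div_distrib]

lemma Mword_sub (hA : ∀ a : A, a ^ p = 1) (q r : (ZMod p)[X]) (v : ZMod p → A) :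
    Mword p A (q - r) v = Mword p A q v / Mword p A r v := by
  simp only [Mword, coeff_sub, pow_val_sub hA, Finset.prod_div_distrib]

lemma Mword_C_mul (hA : ∀ a : A, a ^ p = 1) (c : ZMod p) (q : (ZMod p)[X]) (v : ZMod p → A) :
    Mword p A (C c * q) v = Mword p A q v ^ c.val := by
  simp only [Mword, coeff_C_mul, mul_comm c, pow_val_mul hA, Finset.prod_pow]

lemma coeff_X_mul_val_add_one {q : (ZMod p)[X]} (hq : q.coeff (p - 1) = 0) (j : ZMod p) :
    (X * q).coeff (j + 1).val = q.coeff j.val := by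
  have hj := j.val_lt
  rw [ZMod.val_add, ZMod.val_one_eq_one_mod, Nat.add_mod_mod]
  rcases (show j.val + 1 ≤ p from hj).lt_or_eq with hlt | heq
  · rw [Nat.mod_eq_of_lt hlt, coeff_X_mul]
  · rw [heq, Nat.mod_self, coeff_X_mul_zero, show j.val = p - 1 by omega, hq]

lemma Mword_X_mul {q : (ZMod p)[X]} (hq : q.coeff (p - 1) = 0) (v : ZMod p → A) :
    Mword p A (X * q) v = Mword p A q fun j => v (j + 1) := by
  rw [Mword, Mword, ← Fintype.prod_equiv (Equiv.addRight (1 : ZMod p))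
    (fun j => v (j + 1) ^ ((X * q).coeff (j + 1).val).val) _ fun _ => rfl]
  simp only [coeff_X_mul_val_add_one hq]

end Mword

section Difference

variable (p : ℕ) (A : Type*) [CommGroup A]

def diffHom : (ZMod p → A) →* (ZMod p → A) where
  toFun v j := v j / v (j + 1)
  map_one' := by funext j; simp
  map_mul' v w := by funext j; simp [mul_div_mul_comm]

def diffSubgroup : ℕ → Subgroup (ZMod p → A)
  | 0 => ⊤
  | n + 1 => (diffSubgroup n).map (diffHom p A)

variable {p A}

@[simp] lemma diffHom_apply (v : ZMod p → A) (j : ZMod p) :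
    diffHom p A v j = v j / v (j + 1) := rfl

lemma prod_diffHom [NeZero p] (v : ZMod p → A) : ∏ j, diffHom p A v j = 1 := by
  simp only [diffHom_apply, Finset.prod_div_distrib,
    Fintype.prod_equiv (Equiv.addRight (1 : ZMod p)) (fun j => v (j + 1)) v fun _ => rfl,
    div_self']

lemma prod_range_natCast [NeZero p] (v : ZMod p → A) :
    ∏ k ∈ Finset.range p, v k = ∏ j, v j :=
  Finset.prod_nbij' (fun k => (k : ZMod p)) ZMod.val (by simp) (by simp [ZMod.val_lt])
    (fun k hk => ZMod.val_cast_of_lt (Finset.mem_range.1 hk)) (by simp) (by simp)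

lemma mem_range_diffHom_iff [NeZero p] {v : ZMod p → A} :
    v ∈ (diffHom p A).range ↔ ∏ j, v j = 1 := by
  refine ⟨by rintro ⟨w, rfl⟩; exact prod_diffHom w, fun hv => ?_⟩
  refine ⟨fun j => (∏ k ∈ Finset.range j.val, v k)⁻¹, funext fun j => ?_⟩
  rw [diffHom_apply, inv_div_inv, ZMod.val_add, ZMod.val_one_eq_one_mod, Nat.add_mod_mod]
  rcases (show j.val + 1 ≤ p from j.val_lt).lt_or_eq with hlt | heq
  · rw [Nat.mod_eq_of_lt hlt, Finset.prod_range_succ, ZMod.natCast_zmod_val, mul_div_cancel_left]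
  · have hprod : ∏ k ∈ Finset.range (j.val + 1), v k = 1 := by rw [heq, prod_range_natCast, hv]
    rw [Finset.prod_range_succ, ZMod.natCast_zmod_val] at hprod
    rw [heq, Nat.mod_self, Finset.prod_range_zero, one_div, ← eq_inv_of_mul_eq_one_right hprod]

lemma shift_mem_diffSubgroup {n : ℕ} {v : ZMod p → A} (hv : v ∈ diffSubgroup p A n)
    (c : ZMod p) : (fun j => v (j + c)) ∈ diffSubgroup p A n := by
  induction n generalizing v with
  | zero => trivial
  | succ n ih =>
    obtain ⟨w, hw, rfl⟩ := hv
    exact ⟨fun j => w (j + c), ih hw, funext fun j => by simp [add_right_comm]⟩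

lemma div_shift_mem_map_diffHom {K : Subgroup (ZMod p → A)}
    (hK : ∀ v ∈ K, ∀ c : ZMod p, (fun j => v (j + c)) ∈ K) {m : ZMod p → A} (hm : m ∈ K)
    (k : ℕ) : (m / fun j => m (j + k)) ∈ K.map (diffHom p A) := by
  induction k with
  | zero => simp
  | succ k ih =>
    have hstep : (m / fun j => m (j + (k + 1 : ℕ))) =
        (m / fun j => m (j + k)) * diffHom p A (fun j => m (j + k)) := by
      funext j
      simp [add_right_comm, add_assoc]
    rw [hstep]
    exact mul_mem ih ⟨_, hK m hm k, rfl⟩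

end Difference

section Powers

variable {p : ℕ} [NeZero p] {A : Type*} [CommGroup A]

lemma Mword_diffHom (hA : ∀ a : A, a ^ p = 1) {q : (ZMod p)[X]} (hq : q.coeff (p - 1) = 0)
    (v : ZMod p → A) : Mword p A q (diffHom p A v) = (Mword p A ((X - 1) * q) v)⁻¹ := by
  change Mword p A q (v / fun j => v (j + 1)) = _
  rw [Mword_div, ← Mword_X_mul hq, sub_mul, one_mul, Mword_sub hA, inv_div]

lemma Mword_X_sub_one_pow_diffHom (hA : ∀ a : A, a ^ p = 1) {ℓ : ℕ} (hℓ : ℓ < p - 1)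
    (v : ZMod p → A) :
    Mword p A ((X - 1) ^ ℓ) (diffHom p A v) = (Mword p A ((X - 1) ^ (ℓ + 1)) v)⁻¹ := by
  have hdeg : ((X - 1 : (ZMod p)[X]) ^ ℓ).natDegree ≤ ℓ := by
    simpa using natDegree_pow_le_of_le ℓ (natDegree_X_sub_C_le (1 : ZMod p))
  rw [Mword_diffHom hA (coeff_eq_zero_of_natDegree_lt (hdeg.trans_lt hℓ)), pow_succ']

end Powers

lemma geom_sum_X_eq_X_sub_one_pow (p : ℕ) [Fact p.Prime] (R : Type*) [Ring R] [CharP R p] :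
    ∑ k ∈ Finset.range p, (X : R[X]) ^ k = (X - 1) ^ (p - 1) := by
  have h := cyclotomic_mul_prime_pow_eq R (p := p) (m := 1) (Nat.Prime.not_dvd_one Fact.out) one_pos
  rwa [pow_one, mul_one, Nat.sub_self, pow_zero, cyclotomic_one, cyclotomic_prime] at h

section Prime

variable {p : ℕ} [Fact p.Prime] {A : Type*} [CommGroup A]

lemma Mword_X_sub_one_pow_pred (v : ZMod p → A) :
    Mword p A ((X - 1) ^ (p - 1)) v = ∏ j, v j := by
  refine Finset.prod_congr rfl fun j _ => ?_
  rw [← geom_sum_X_eq_X_sub_one_pow, finsetSum_coeff]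
  simp [coeff_X_pow, j.val_lt, ZMod.val_one]

lemma Mword_C_mul_eq_one_iff (hA : ∀ a : A, a ^ p = 1) {c : ZMod p} (hc : c ≠ 0)
    (q : (ZMod p)[X]) (v : ZMod p → A) : Mword p A (C c * q) v = 1 ↔ Mword p A q v = 1 := by
  rw [Mword_C_mul hA]
  refine ⟨fun h => ?_, fun h => by rw [h, one_pow]⟩
  rw [← pow_one (Mword p A q v), ← ZMod.val_one p, ← mul_inv_cancel₀ hc, pow_val_mul hA, h,
    one_pow]

lemma natCast_descFactorial_pred_ne_zero {ℓ : ℕ} (hℓ : ℓ ≤ p - 1) :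
    ((p - 1).descFactorial ℓ : ZMod p) ≠ 0 := by
  intro h
  have hfact := congrArg (Nat.cast : ℕ → ZMod p) (Nat.factorial_mul_descFactorial hℓ)
  rw [Nat.cast_mul, h, mul_zero, ZMod.wilsons_lemma] at hfact
  exact neg_ne_zero.2 one_ne_zero hfact.symm

lemma Mword_iterate_derivative_geom_sum_eq_one_iff (hA : ∀ a : A, a ^ p = 1) {ℓ : ℕ}
    (hℓ : ℓ ≤ p - 1) (v : ZMod p → A) :
    Mword p A (derivative^[ℓ] (∑ k ∈ Finset.range p, X ^ k)) v = 1 ↔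
      Mword p A ((X - 1) ^ (p - 1 - ℓ)) v = 1 := by
  rw [geom_sum_X_eq_X_sub_one_pow, ← C_1, iterate_derivative_X_sub_pow, C_1, nsmul_eq_mul,
    ← C_eq_natCast, Mword_C_mul_eq_one_iff hA (natCast_descFactorial_pred_ne_zero hℓ)]

lemma mem_diffSubgroup_iff (hA : ∀ a : A, a ^ p = 1) {n : ℕ} (hn : n ≤ p - 1)
    {v : ZMod p → A} :
    v ∈ diffSubgroup p A n ↔ ∀ ℓ, p - n ≤ ℓ → ℓ ≤ p - 1 → Mword p A ((X - 1) ^ ℓ) v = 1 := by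
  have hp : 0 < p := (Fact.out : p.Prime).pos
  induction n generalizing v with
  | zero => exact ⟨fun _ ℓ h1 h2 => absurd h2 (by omega), fun _ => trivial⟩
  | succ n ih =>
    constructor
    · rintro ⟨w, hw, rfl⟩ ℓ h1 h2
      rcases h2.lt_or_eq with hlt | rfl
      · rw [Mword_X_sub_one_pow_diffHom hA hlt, (ih (by omega)).1 hw (ℓ + 1) (by omega) (by omega),
          inv_one]
      · rw [Mword_X_sub_one_pow_pred, prod_diffHom]
    · intro hv
      obtain ⟨w, rfl⟩ := mem_range_diffHom_iff.2
        ((Mword_X_sub_one_pow_pred v).symm.trans (hv _ (by omega) le_rfl))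
      refine ⟨w, (ih (by omega)).2 fun ℓ h1 h2 => ?_, rfl⟩
      have hw := hv (ℓ - 1) (by omega) (by omega)
      rwa [Mword_X_sub_one_pow_diffHom hA (by omega), Nat.sub_add_cancel (by omega),
        inv_eq_one] at hw

end Prime

section Wreath

variable (p : ℕ) (A : Type*) [CommGroup A]

def leftProd [NeZero p] : W p A →* A where
  toFun w := ∏ j, w.left j
  map_one' := Finset.prod_const_one
  map_mul' a b := by
    change ∏ j, a.left j * b.left (j + Multiplicative.toAdd a.right) = _
    rw [Finset.prod_mul_distrib,
      Fintype.prod_equiv (Equiv.addRight (Multiplicative.toAdd a.right))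
        (fun j => b.left (j + Multiplicative.toAdd a.right)) b.left fun _ => rfl]

variable {p A}

lemma shiftAut_apply {G : Type*} [Group G] (k : Multiplicative (ZMod p)) (v : ZMod p → G)
    (i : ZMod p) :
    shiftAut p G k v i = v (i + Multiplicative.toAdd k) := rfl

lemma commutatorElement_inlW (m : ZMod p → A) (b : W p A) :
    ⁅inlW p A m, b⁆ = inlW p A (m / fun j => m (j + Multiplicative.toAdd b.right)) := by
  ext j
  · simp only [commutatorElement_def, inlW, SemidirectProduct.mul_left,
      SemidirectProduct.inv_left, SemidirectProduct.left_inl, SemidirectProduct.right_inl,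
      SemidirectProduct.inv_right, SemidirectProduct.mul_right, one_mul, inv_one, mul_one,
      map_one, MulAut.one_apply, Pi.mul_apply, Pi.inv_apply, Pi.div_apply, shiftAut_apply,
      toAdd_inv, add_neg_cancel_right]
    rw [mul_right_comm, mul_inv_cancel_right, div_eq_mul_inv]
  · simp only [commutatorElement_def, inlW, SemidirectProduct.mul_right,
      SemidirectProduct.inv_right, SemidirectProduct.right_inl, one_mul, inv_one, mul_one,
      mul_inv_cancel]

lemma inlW_diffHom (v : ZMod p → A) : inlW p A (diffHom p A v) = ⁅inlW p A v, sigma p A⁆ := by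
  rw [commutatorElement_inlW]
  rfl

end Wreath

section LowerCentralSeries

variable {p : ℕ} [NeZero p] {A : Type*} [CommGroup A]

lemma commutator_map_inlW_top {K : Subgroup (ZMod p → A)}
    (hK : ∀ v ∈ K, ∀ c : ZMod p, (fun j => v (j + c)) ∈ K) :
    ⁅K.map (inlW p A), ⊤⁆ = (K.map (diffHom p A)).map (inlW p A) := by
  refine le_antisymm ?_ ?_
  · rw [Subgroup.commutator_le]
    rintro _ ⟨m, hm, rfl⟩ b -
    rw [commutatorElement_inlW, ← ZMod.natCast_zmod_val (Multiplicative.toAdd b.right)]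
    exact ⟨_, div_shift_mem_map_diffHom hK hm _, rfl⟩
  · rintro _ ⟨_, ⟨w, hw, rfl⟩, rfl⟩
    rw [inlW_diffHom]
    exact Subgroup.commutator_mem_commutator ⟨w, hw, rfl⟩ trivial

lemma commutator_top_top_eq :
    ⁅(⊤ : Subgroup (W p A)), ⊤⁆ = (diffSubgroup p A 1).map (inlW p A) := by
  refine le_antisymm (fun x hx => ?_) ?_
  · have hright : x.right = 1 := Abelianization.commutator_subset_ker SemidirectProduct.rightHom hx
    have hprod : leftProd p A x = 1 := Abelianization.commutator_subset_ker (leftProd p A) hx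
    refine ⟨x.left, ?_, ?_⟩
    · rw [diffSubgroup, diffSubgroup, ← MonoidHom.range_eq_map]
      exact mem_range_diffHom_iff.2 hprod
    · change SemidirectProduct.inl x.left = x
      simpa [hright] using SemidirectProduct.inl_left_mul_inr_right x
  · calc (diffSubgroup p A 1).map (inlW p A)
        = ⁅(⊤ : Subgroup (ZMod p → A)).map (inlW p A), ⊤⁆ :=
          (commutator_map_inlW_top fun _ _ _ => Subgroup.mem_top _).symm
      _ ≤ ⁅⊤, ⊤⁆ := Subgroup.commutator_mono le_top le_rfl

lemma lowerCentralSeries_succ_eq_map_inlW (n : ℕ) :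
    Subgroup.lowerCentralSeries (⊤ : Subgroup (W p A)) (n + 1) =
      (diffSubgroup p A (n + 1)).map (inlW p A) := by
  induction n with
  | zero => exact commutator_top_top_eq
  | succ n ih =>
    change ⁅Subgroup.lowerCentralSeries ⊤ (n + 1), ⊤⁆ = _
    rw [ih]
    exact commutator_map_inlW_top fun _ hv c => shift_mem_diffSubgroup hv c

end LowerCentralSeries

lemma coe_lowerCentralSeries_eq_image_inlW {p : ℕ} [Fact p.Prime] {A : Type*} [CommGroup A]
    (hA : ∀ a : A, a ^ p = 1) {i : ℕ} (hi2 : 2 ≤ i) (hip : i ≤ p) :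
    (Subgroup.lowerCentralSeries (⊤ : Subgroup (W p A)) (i - 1) : Set (W p A)) =
      inlW p A '' {v | ∀ ℓ, p - i + 1 ≤ ℓ → ℓ ≤ p - 1 → Mword p A ((X - 1) ^ ℓ) v = 1} := by
  obtain ⟨n, rfl⟩ : ∃ n, i = n + 2 := ⟨i - 2, by omega⟩
  rw [show n + 2 - 1 = n + 1 from rfl, lowerCentralSeries_succ_eq_map_inlW, Subgroup.coe_map]
  congr 1
  ext v
  rw [SetLike.mem_coe, mem_diffSubgroup_iff hA (by omega),
    show p - (n + 1) = p - (n + 2) + 1 by omega]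
  rfl

end GGS

theorem statement11_general (p : ℕ) [Fact p.Prime]
    (A : Type*) [CommGroup A] (hA : ∀ a : A, a ^ p = 1)
    (i : ℕ) (hi2 : 2 ≤ i) (hip : i ≤ p) :
    ((Subgroup.lowerCentralSeries (⊤ : Subgroup (W p A)) (i - 1) : Subgroup (W p A)) : Set (W p A))
      = (fun v : ZMod p → A => inlW p A v) ''
          {v : ZMod p → A | ∀ ℓ : ℕ, p - i + 1 ≤ ℓ → ℓ ≤ p - 1 →
            Mword p A ((Polynomial.X - 1) ^ ℓ) v = 1}
    ∧ ((Subgroup.lowerCentralSeries (⊤ : Subgroup (W p A)) (i - 1) : Subgroup (W p A)) : Set (W p A))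
      = (fun v : ZMod p → A => inlW p A v) ''
          {v : ZMod p → A | ∀ ℓ : ℕ, ℓ ≤ i - 2 →
            Mword p A ((fun q : Polynomial (ZMod p) => Polynomial.derivative q)^[ℓ]
              (∑ k ∈ Finset.range p, Polynomial.X ^ k)) v = 1} := by
  have hlcs := coe_lowerCentralSeries_eq_image_inlW hA hi2 hip
  refine ⟨hlcs, hlcs.trans (congrArg _ (Set.ext fun v => ⟨fun hv ℓ hℓ => ?_, ?_⟩))⟩
  · exact (Mword_iterate_derivative_geom_sum_eq_one_iff hA (by omega) v).2
      (hv _ (by omega) (by omega))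
  · intro hv ℓ h1 h2
    have h := (Mword_iterate_derivative_geom_sum_eq_one_iff hA (by omega) v).1
      (hv (p - 1 - ℓ) (by omega))
    rwa [Nat.sub_sub_self h2] at h

/-- For an elementary abelian finite p-group A and 2 ≤ i ≤ p, γ_i(W(A)) consists exactly of
    the tuples in B(A) satisfying (a) M((X−1)^ℓ) = 1 for p−i+1 ≤ ℓ ≤ p−1, and equally
    exactly of those satisfying (b) M(f^{(ℓ)}(X)) = 1 for 0 ≤ ℓ ≤ i−2, where
    f(X) = 1 + X + ⋯ + X^{p−1}.
    (γ_i(W(A)) = `lowerCentralSeries (W p A) (i-1)`.) -/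
theorem statement11 (p : ℕ) [Fact p.Prime] (hp : Odd p)
    (A : Type*) [CommGroup A] [Fintype A] (hA : ∀ a : A, a ^ p = 1)
    (i : ℕ) (hi2 : 2 ≤ i) (hip : i ≤ p) :
    ((Subgroup.lowerCentralSeries (⊤ : Subgroup (W p A)) (i - 1) : Subgroup (W p A)) : Set (W p A))
      = (fun v : ZMod p → A => inlW p A v) ''
          {v : ZMod p → A | ∀ ℓ : ℕ, p - i + 1 ≤ ℓ → ℓ ≤ p - 1 →
            Mword p A ((Polynomial.X - 1) ^ ℓ) v = 1}
    ∧ ((Subgroup.lowerCentralSeries (⊤ : Subgroup (W p A)) (i - 1) : Subgroup (W p A)) : Set (W p A))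
      = (fun v : ZMod p → A => inlW p A v) ''
          {v : ZMod p → A | ∀ ℓ : ℕ, ℓ ≤ i - 2 →
            Mword p A ((fun q : Polynomial (ZMod p) => Polynomial.derivative q)^[ℓ]
              (∑ k ∈ Finset.range p, Polynomial.X ^ k)) v = 1} :=
  statement11_general p A hA i hi2 hip
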